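/- arXiv:1902.08837 — 8 statements merged into one kernel-verified Lean document; each statement's English description precedes it below -/
import Mathlib

section
/- For every natural number x ≥ 1, f(x) is the minimum of the set of natural numbers not belonging to {f(i) : i < x} ∪ {f(i) + i : i < x}. -/
noncomputable def phi : ℝ := (1 + Real.sqrt 5) / 2

noncomputable def f (n : ℕ) : ℕ := ⌊phi * n⌋₊

/-! Since `1/φ + 1/(φ + 1) = 1` and `φ` is irrational, Rayleigh's theorem says that the Beatty
sequences `⌊φ n⌋ = f n` and `⌊(φ + 1) n⌋ = f n + n` (`n ≥ 1`) partition the positive integers. As `f`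
is strictly increasing, every `n < f x` is then `f i` or `f i + i` for some `i < x`, while `f x`
itself is neither. -/

open Real

theorem natCast_mem_beattySeq_pos_iff {r : ℝ} (hr : 0 ≤ r) (n : ℕ) :
    (n : ℤ) ∈ {beattySeq r k | k > 0} ↔ ∃ k : ℕ, 0 < k ∧ ⌊r * k⌋₊ = n := by
  have hfloor (k : ℕ) : beattySeq r k = ⌊r * k⌋₊ := by
    rw [beattySeq, Int.cast_natCast, mul_comm, Int.natCast_floor_eq_floor (by positivity)]
  constructor
  · rintro ⟨k, hk, hkn⟩
    lift k to ℕ using hk.le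
    exact ⟨k, by exact_mod_cast hk, by rw [hfloor] at hkn; exact_mod_cast hkn⟩
  · rintro ⟨k, hk, rfl⟩
    exact ⟨k, by exact_mod_cast hk, hfloor k⟩

theorem Irrational.xor_exists_nat_floor_mul {r s : ℝ} (hrs : r.HolderConjugate s)
    (hr : Irrational r) {n : ℕ} (hn : 0 < n) :
    Xor (∃ k : ℕ, 0 < k ∧ ⌊r * k⌋₊ = n) (∃ k : ℕ, 0 < k ∧ ⌊s * k⌋₊ = n) := by
  have hpos : (n : ℤ) ∈ {m : ℤ | 0 < m} := Int.natCast_pos.2 hn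
  rwa [← hr.beattySeq_symmDiff_beattySeq_pos hrs, Set.mem_symmDiff,
    natCast_mem_beattySeq_pos_iff hrs.nonneg, natCast_mem_beattySeq_pos_iff hrs.symm.nonneg] at hpos

theorem strictMono_nat_floor_mul {r : ℝ} (hr : 1 ≤ r) : StrictMono fun n : ℕ ↦ ⌊r * n⌋₊ := by
  refine strictMono_nat_of_lt_succ fun n ↦ ?_
  have hrn : 0 ≤ r * n := by positivity
  calc ⌊r * n⌋₊ < ⌊r * n + 1⌋₊ := by rw [Nat.floor_add_one hrn]; exact Nat.lt_succ_self _
    _ ≤ ⌊r * ↑(n + 1)⌋₊ := Nat.floor_le_floor (by push_cast; linarith)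

theorem holderConjugate_goldenRatio_goldenRatio_add_one :
    goldenRatio.HolderConjugate (goldenRatio + 1) := by
  rw [holderConjugate_iff, ← goldenRatio_sq, ← inv_pow, inv_goldenRatio, neg_sq, goldenConj_sq]
  exact ⟨one_lt_goldenRatio, by ring⟩

theorem phi_eq_goldenRatio : phi = goldenRatio := rfl

theorem f_strictMono : StrictMono f :=
  strictMono_nat_floor_mul one_lt_goldenRatio.le

theorem f_add_self_eq_floor (i : ℕ) : f i + i = ⌊(goldenRatio + 1) * i⌋₊ := by
  rw [f, add_mul, one_mul, Nat.floor_add_natCast (by positivity), phi_eq_goldenRatio]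

theorem xor_exists_f_exists_f_add_self {n : ℕ} (hn : 0 < n) :
    Xor (∃ i, 0 < i ∧ f i = n) (∃ i, 0 < i ∧ f i + i = n) := by
  have h := goldenRatio_irrational.xor_exists_nat_floor_mul
    holderConjugate_goldenRatio_goldenRatio_add_one hn
  simp only [← f_add_self_eq_floor] at h
  exact h

theorem f_ne_f_add_self_of_lt {i x : ℕ} (hi : i < x) : f x ≠ f i + i := by
  intro h
  rcases Nat.eq_zero_or_pos i with rfl | hi0
  · exact (f_strictMono hi).ne' (by simpa using h)
  · have hfx : 0 < f x := h ▸ Nat.add_pos_right _ hi0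
    rcases xor_exists_f_exists_f_add_self hfx with ⟨-, hnotB⟩ | ⟨-, hnotA⟩
    · exact hnotB ⟨i, hi0, h.symm⟩
    · exact hnotA ⟨x, hi0.trans hi, rfl⟩

theorem exists_lt_of_lt_f {n x : ℕ} (h : n < f x) : (∃ i < x, n = f i) ∨ ∃ i < x, n = f i + i := by
  rcases Nat.eq_zero_or_pos n with rfl | hn
  · exact .inl ⟨0, f_strictMono.lt_iff_lt.1 (by simpa [f] using h), by simp [f]⟩
  · rcases Xor.or (xor_exists_f_exists_f_add_self hn) with ⟨i, -, rfl⟩ | ⟨i, -, rfl⟩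
    · exact .inl ⟨i, f_strictMono.lt_iff_lt.1 h, rfl⟩
    · exact .inr ⟨i, lt_of_not_ge fun hxi ↦ (f_strictMono.monotone hxi).not_gt (by omega), rfl⟩

theorem f_eq_sInf_general (x : ℕ) :
    f x = sInf {n : ℕ | n ∉ ({m : ℕ | ∃ i < x, m = f i} ∪ {m : ℕ | ∃ i < x, m = f i + i})} := by
  refine (IsLeast.csInf_eq ⟨?_, fun n hn ↦ not_lt.1 fun h ↦ absurd (exists_lt_of_lt_f h) hn⟩).symm
  rintro (⟨i, hi, h⟩ | ⟨i, hi, h⟩)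
  · exact (f_strictMono hi).ne' h
  · exact f_ne_f_add_self_of_lt hi h

theorem f_eq_sInf (x : ℕ) (hx : 1 ≤ x) :
    f x = sInf {n : ℕ | n ∉ ({m : ℕ | ∃ i < x, m = f i} ∪ {m : ℕ | ∃ i < x, m = f i + i})} :=
  f_eq_sInf_general x
end

section
/- For every natural number x ≥ 1, f(f(x)) = f(x) + x − 1; that is, ⌊φ·⌊φ·x⌋⌋ = ⌊φ·x⌋ + x − 1. -/
lemma sqrt5_sq : Real.sqrt 5 * Real.sqrt 5 = 5 := by
  exact Real.mul_self_sqrt (by norm_num)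

lemma phi_sq : phi * phi = phi + 1 := by
  unfold phi
  have := sqrt5_sq
  ring_nf
  nlinarith [sqrt5_sq]

lemma phi_pos : 0 < phi := by
  unfold phi
  have := Real.sqrt_nonneg 5
  linarith

lemma phi_lt_two : phi < 2 := by
  unfold phi
  have : Real.sqrt 5 < 3 := by
    nlinarith [sqrt5_sq, Real.sqrt_nonneg 5]
  linarith

lemma phi_gt_one : 1 < phi := by
  unfold phi
  have : 2 < Real.sqrt 5 := by
    nlinarith [sqrt5_sq, Real.sqrt_nonneg 5]
  linarith

lemma irr_phi_mul (x : ℕ) (hx : 1 ≤ x) (m : ℕ) : phi * x ≠ m := by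
  intro h
  have hs : Real.sqrt 5 = (2 * m - x) / x := by
    unfold phi at h
    have hx0 : (x:ℝ) ≠ 0 := by positivity
    field_simp
    field_simp at h
    linarith
  have : Irrational (Real.sqrt 5) := by
    have : Nat.Prime 5 := by norm_num
    exact this.irrational_sqrt
  rw [hs] at this
  apply this
  exact ⟨(2*m - x : ℤ)/(x:ℤ), by push_cast; ring⟩

theorem f_f (x : ℕ) (hx : 1 ≤ x) : f (f x) = f x + x - 1 := by
  have hp := phi_pos
  set m := f x with hm
  have hmx : (m : ℝ) ≤ phi * x := Nat.floor_le (by positivity)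
  have hmx' : (m : ℝ) < phi * x := lt_of_le_of_ne hmx (fun h => irr_phi_mul x hx m h.symm)
  have hub : phi * x < m + 1 := Nat.lt_floor_add_one _
  have hmx1 : 1 ≤ m := by
    have : (1:ℝ) ≤ phi * x := by
      have : (1:ℝ) ≤ x := by exact_mod_cast hx
      nlinarith [phi_gt_one]
    have := Nat.le_floor (by exact_mod_cast this : ((1:ℕ):ℝ) ≤ phi * x)
    exact this
  -- target value
  have key : f m = m + x - 1 := by
    have hcast : ((m + x - 1 : ℕ) : ℝ) = (m : ℝ) + x - 1 := by
      have : 1 ≤ m + x := le_trans hmx1 (Nat.le_add_right _ _)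
      push_cast [Nat.cast_sub this]
      ring
    apply Nat.floor_eq_iff'  (by omega) |>.mpr
    constructor
    · rw [hcast]
      -- phi * m = phi*(phi*x - θ) = phi*x + x - phi*θ  where θ = phi*x - m
      nlinarith [phi_sq, phi_lt_two, phi_gt_one]
    · have : ((m + x - 1 : ℕ) : ℝ) + 1 = (m : ℝ) + x := by rw [hcast]; ring
      rw [this]
      nlinarith [phi_sq, phi_gt_one]
  simpa using key
end

section
/- No two consecutive positive integers both belong to the complementary Beatty sequence: there do not exist natural numbers x ≥ 1 and y ≥ 1 such that f(y) + y = f(x) + x + 1. -/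
lemma phi_ge_one : (1:ℝ) ≤ phi := by
  have h2 : (1:ℝ) ≤ Real.sqrt 5 := by
    rw [show (1:ℝ) = Real.sqrt 1 by simp]
    exact Real.sqrt_le_sqrt (by norm_num)
  unfold phi; linarith

lemma f_mono {x y : ℕ} (h : x ≤ y) : f x ≤ f y := by
  apply Nat.floor_le_floor
  have : (x:ℝ) ≤ y := Nat.cast_le.mpr h
  nlinarith [phi_ge_one]

lemma f_succ (x : ℕ) : f x + 1 ≤ f (x+1) := by
  have h0 : (0:ℝ) ≤ phi * x := by
    have := phi_ge_one; positivity
  have h1 : phi * x + 1 ≤ phi * (x+1 : ℕ) := by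
    push_cast; nlinarith [phi_ge_one]
  calc f x + 1 = ⌊phi * x + 1⌋₊ := (Nat.floor_add_one h0).symm
    _ ≤ f (x+1) := Nat.floor_le_floor h1

theorem no_consecutive_in_complement :
    ¬ ∃ x : ℕ, 1 ≤ x ∧ ∃ y : ℕ, 1 ≤ y ∧ f y + y = f x + x + 1 := by
  rintro ⟨x, hx, y, hy, heq⟩
  rcases le_or_gt y x with h | h
  · have := f_mono h
    omega
  · have h1 : x + 1 ≤ y := h
    have h2 := f_succ x
    have h3 := f_mono h1
    omega
end

section
/- For every natural number n ≥ 2 and every natural number i with 1 ≤ i ≤ fib(n), the integer fib(n+1) + i lies in the range of f on positive integers if and only if i does; that is, (∃ x ≥ 1, fib(n+1) + i = ⌊φ·x⌋) ↔ (∃ x ≥ 1, i = ⌊φ·x⌋). -/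
/-!
A natural number `m` is a value `⌊φ x⌋` with `x ≥ 1` exactly when `fract (m φ) > 2 - φ`: by
`φ² = φ + 1`, `m < φ x < m + 1` is equivalent to `x + m - 1 + (2 - φ) < m φ < x + m`.
Since `F_{n+1} φ = F_{n+2} - ψ^(n+1)`, adding `F_{n+1}` to `i` moves `fract (i φ)` by `-ψ^(n+1)`.
By the best-approximation property of the convergents of `φ`, `|q φ - p| ≥ |ψ|^n` whenever
`0 < q < F_{n+1}`; applied to `q = i` and `q = i + 1` this keeps `fract (i φ)` at distance at
least `|ψ|^n > |ψ^(n+1)|` from `0`, from `1` and from the threshold `2 - φ`, so the shift crosses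
none of them. The only `i ≤ F_n` with `i + 1 = F_{n+1}` occur for `n ≤ 3` and are checked by hand.
-/

open Real
open scoped goldenRatio

lemma f_eq_floor_goldenRatio_mul (x : ℕ) : f x = ⌊φ * x⌋₊ := rfl

lemma eight_fifths_lt_goldenRatio : 8 / 5 < φ := by
  nlinarith [goldenRatio_sq, goldenRatio_pos]

lemma goldenRatio_lt_five_thirds : φ < 5 / 3 := by
  nlinarith [goldenRatio_sq, goldenRatio_pos]

lemma abs_goldenConj : |ψ| = φ - 1 := by
  rw [abs_of_neg goldenConj_neg, ← one_sub_goldenConj]; ring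

lemma abs_goldenConj_lt_one : |ψ| < 1 := by
  rw [abs_goldenConj]; linarith [goldenRatio_lt_two]

lemma two_mul_abs_goldenConj_pow_add_two_le (n : ℕ) : 2 * |ψ| ^ (n + 2) ≤ |ψ| ^ n := by
  have h : 2 * |ψ| ^ 2 ≤ 1 := by
    rw [abs_goldenConj]; nlinarith [eight_fifths_lt_goldenRatio, goldenRatio_sq]
  rw [pow_add]
  nlinarith [pow_nonneg (abs_nonneg ψ) n]

lemma abs_goldenConj_pow_succ_lt (n : ℕ) : |ψ ^ (n + 1)| < |ψ| ^ n := by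
  rw [abs_pow, pow_succ]
  exact mul_lt_of_lt_one_right (pow_pos (abs_pos.2 goldenConj_ne_zero) n) abs_goldenConj_lt_one

lemma natCast_fib_add_mul_goldenRatio (n r : ℕ) :
    ((Nat.fib (n + 1) + r : ℕ) : ℝ) * φ = r * φ + Nat.fib (n + 2) - ψ ^ (n + 1) := by
  push_cast
  linarith [fib_succ_sub_goldenRatio_mul_fib (n + 1)]

theorem abs_goldenConj_pow_le_abs_mul_goldenRatio_sub (n : ℕ) {q : ℕ} (hq : 0 < q)
    (hqn : q < Nat.fib (n + 1)) (p : ℤ) : |ψ| ^ n ≤ |q * φ - p| := by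
  induction n using Nat.strong_induction_on generalizing q p with
  | _ n ih =>
  obtain _ | _ | n := n
  · simp at hqn; omega
  · simp at hqn; omega
  rcases lt_or_ge q (Nat.fib (n + 2)) with hlt | hge
  · exact (pow_le_pow_of_le_one (abs_nonneg _) abs_goldenConj_lt_one.le (by omega)).trans
      (ih (n + 1) (by omega) hq hlt p)
  obtain ⟨r, rfl⟩ := Nat.exists_eq_add_of_le hge
  set z : ℤ := p - Nat.fib (n + 3)
  have hsplit : ((Nat.fib (n + 2) + r : ℕ) : ℝ) * φ - p = (r * φ - z) - ψ ^ (n + 2) := by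
    rw [natCast_fib_add_mul_goldenRatio (n + 1) r]; push_cast [z]; ring
  have htri := abs_sub_abs_le_abs_sub (r * φ - z) (ψ ^ (n + 2))
  have hdecay := two_mul_abs_goldenConj_pow_add_two_le n
  rw [abs_pow] at htri
  show |ψ| ^ (n + 2) ≤ _
  rw [hsplit]
  rcases Nat.eq_zero_or_pos r with rfl | hr
  · rw [Nat.cast_zero, zero_mul, zero_sub] at htri ⊢
    rcases eq_or_ne z 0 with hz | hz
    · simp [hz, abs_pow]
    have hz1 : (1 : ℝ) ≤ |(z : ℝ)| := by exact_mod_cast Int.one_le_abs hz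
    have hpow : |ψ| ^ n ≤ 1 := pow_le_one₀ (abs_nonneg _) abs_goldenConj_lt_one.le
    rw [abs_neg] at htri
    linarith
  · have hfib : Nat.fib (n + 3) = Nat.fib (n + 1) + Nat.fib (n + 2) := Nat.fib_add_two
    linarith [ih n (by omega) hr (by simp only [hfib] at hqn; omega) z]

lemma lt_goldenRatio_mul_iff {a b : ℝ} : a < φ * b ↔ a * φ < a + b := by
  have hφ : 0 < φ - 1 := sub_pos.2 one_lt_goldenRatio
  have key : φ * b * (φ - 1) = b := by linear_combination b * goldenRatio_sq
  rw [← mul_lt_mul_iff_left₀ hφ, key]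
  constructor <;> intro h <;> linarith

lemma goldenRatio_mul_lt_iff {a b : ℝ} : φ * b < a ↔ a + b < a * φ := by
  have hφ : 0 < φ - 1 := sub_pos.2 one_lt_goldenRatio
  have key : φ * b * (φ - 1) = b := by linear_combination b * goldenRatio_sq
  rw [← mul_lt_mul_iff_left₀ hφ, key]
  constructor <;> intro h <;> linarith

theorem exists_f_eq_iff_two_sub_goldenRatio_lt_fract (m : ℕ) :
    (∃ x : ℕ, 1 ≤ x ∧ m = f x) ↔ 2 - φ < Int.fract (m * φ) := by
  constructor
  · rintro ⟨x, hx, rfl⟩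
    rw [f_eq_floor_goldenRatio_mul]
    set m := ⌊φ * x⌋₊
    have hne : φ * x ≠ ((m : ℤ) : ℝ) :=
      (goldenRatio_irrational.mul_natCast (by omega)).ne_int _
    have hlo : (m : ℝ) < φ * x :=
      (Nat.floor_le (by positivity)).lt_of_ne (by exact_mod_cast hne.symm)
    have hhi : φ * x < m + 1 := Nat.lt_floor_add_one _
    rw [lt_goldenRatio_mul_iff] at hlo
    rw [goldenRatio_mul_lt_iff] at hhi
    have hfract : Int.fract (m * φ) = m * φ - ((x + m - 1 : ℤ) : ℝ) :=
      Int.fract_eq_iff.2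
        ⟨by push_cast; linarith [goldenRatio_lt_two], by push_cast; linarith, _, by ring⟩
    rw [hfract]; push_cast; linarith
  · intro h
    have hm : (m : ℤ) ≤ ⌊m * φ⌋ :=
      Int.le_floor.2 <| by
        push_cast; exact le_mul_of_one_le_right m.cast_nonneg one_lt_goldenRatio.le
    obtain ⟨x, hx⟩ : ∃ x : ℕ, (x : ℤ) = ⌊m * φ⌋ + 1 - m := ⟨_, Int.toNat_of_nonneg (by omega)⟩
    have hxℝ : (x : ℝ) = ⌊m * φ⌋ + 1 - m := by exact_mod_cast hx
    have hfloor := Int.floor_add_fract (m * φ)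
    have hfract := Int.fract_lt_one (m * φ)
    refine ⟨x, by omega, ?_⟩
    rw [f_eq_floor_goldenRatio_mul, eq_comm, Nat.floor_eq_iff (by positivity)]
    exact ⟨(lt_goldenRatio_mul_iff.2 (by linarith)).le, goldenRatio_mul_lt_iff.2 (by linarith)⟩

theorem fract_fib_add_mul_goldenRatio {n q : ℕ} (hq : 0 < q) (hqn : q < Nat.fib (n + 1)) :
    Int.fract (((Nat.fib (n + 1) + q : ℕ) : ℝ) * φ) = Int.fract (q * φ) - ψ ^ (n + 1) := by
  have hfloor := Int.floor_add_fract (q * φ)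
  have hfract := Int.fract_lt_one (q * φ)
  have hlo := abs_goldenConj_pow_le_abs_mul_goldenRatio_sub n hq hqn ⌊q * φ⌋
  have hhi := abs_goldenConj_pow_le_abs_mul_goldenRatio_sub n hq hqn (⌊q * φ⌋ + 1)
  rw [Int.self_sub_floor, abs_of_nonneg (Int.fract_nonneg (q * φ))] at hlo
  rw [Int.cast_add, Int.cast_one,
    abs_of_neg (show (q : ℝ) * φ - (⌊q * φ⌋ + 1) < 0 by linarith)] at hhi
  have hε := abs_lt.1 (abs_goldenConj_pow_succ_lt n)
  rw [natCast_fib_add_mul_goldenRatio]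
  refine Int.fract_eq_iff.2 ⟨by linarith, by linarith, ⌊q * φ⌋ + Nat.fib (n + 2), ?_⟩
  push_cast
  linarith

theorem two_sub_goldenRatio_lt_fract_fib_add_iff {n q : ℕ} (hq : 0 < q)
    (hqn : q + 1 < Nat.fib (n + 1)) :
    2 - φ < Int.fract (((Nat.fib (n + 1) + q : ℕ) : ℝ) * φ) ↔ 2 - φ < Int.fract (q * φ) := by
  rw [fract_fib_add_mul_goldenRatio hq (by omega)]
  have hgap := abs_goldenConj_pow_le_abs_mul_goldenRatio_sub n (q := q + 1) (by omega) hqn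
    (⌊q * φ⌋ + 2)
  have hfloor := Int.floor_add_fract (q * φ)
  rw [show ((q + 1 : ℕ) : ℝ) * φ - ((⌊q * φ⌋ + 2 : ℤ) : ℝ) = Int.fract (q * φ) - (2 - φ) by
    push_cast; linarith] at hgap
  have hε := abs_lt.1 (abs_goldenConj_pow_succ_lt n)
  rcases le_abs'.1 hgap with h | h <;> constructor <;> intro <;> linarith

lemma le_three_of_fib_succ_le_fib_add_one {n : ℕ} (h : Nat.fib (n + 1) ≤ Nat.fib n + 1) :
    n ≤ 3 := by
  by_contra! hn
  obtain ⟨k, rfl⟩ : ∃ k, n = k + 4 := ⟨n - 4, by omega⟩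
  have hfib : Nat.fib (k + 4 + 1) = Nat.fib (k + 3) + Nat.fib (k + 4) := Nat.fib_add_two
  have hmono : Nat.fib 3 ≤ Nat.fib (k + 3) := Nat.fib_mono (by omega)
  have hfib3 : Nat.fib 3 = 2 := rfl
  omega

theorem fib_shift_range (n : ℕ) (hn : 2 ≤ n) (i : ℕ) (hi1 : 1 ≤ i)
    (hi2 : i ≤ Nat.fib n) :
    (∃ x : ℕ, 1 ≤ x ∧ Nat.fib (n + 1) + i = f x) ↔ (∃ x : ℕ, 1 ≤ x ∧ i = f x) := by
  rw [exists_f_eq_iff_two_sub_goldenRatio_lt_fract,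
    exists_f_eq_iff_two_sub_goldenRatio_lt_fract]
  rcases lt_or_ge (i + 1) (Nat.fib (n + 1)) with hlt | hge
  · exact two_sub_goldenRatio_lt_fract_fib_add_iff hi1 hlt
  have hn3 : n ≤ 3 := le_three_of_fib_succ_le_fib_add_one (by omega)
  have h₁ := eight_fifths_lt_goldenRatio
  have h₂ := goldenRatio_lt_five_thirds
  interval_cases n
  · obtain rfl : i = 1 := by norm_num [Nat.fib_add_two] at hi2; omega
    have e₃ : Int.fract (3 * φ) = 3 * φ - 4 :=
      Int.fract_eq_iff.2 ⟨by linarith, by linarith, 4, by ring⟩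
    have e₁ : Int.fract φ = φ - 1 :=
      Int.fract_eq_iff.2 ⟨by linarith, by linarith, 1, by ring⟩
    norm_num [Nat.fib_add_two, e₃, e₁]
    constructor <;> intro <;> linarith
  · obtain rfl : i = 2 := by norm_num [Nat.fib_add_two] at hi2 hge; omega
    have e₅ : Int.fract (5 * φ) = 5 * φ - 8 :=
      Int.fract_eq_iff.2 ⟨by linarith, by linarith, 8, by ring⟩
    have e₂ : Int.fract (2 * φ) = 2 * φ - 3 :=
      Int.fract_eq_iff.2 ⟨by linarith, by linarith, 3, by ring⟩
    norm_num [Nat.fib_add_two, e₅, e₂]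
    constructor <;> intro <;> linarith
end

section
/- For every natural number n, f(fib(n)) = fib(n+1) if n is odd, and f(fib(n)) = fib(n+1) − 1 if n is even. -/
/-!
Binet's formula gives `φ · fib n = fib (n + 1) - ψ ^ n` with `ψ = (1 - √5) / 2 ∈ (-1, 0)`.
For odd `n` the error `-ψ ^ n` lies in `(0, 1)`, so the floor is `fib (n + 1)`; for even `n`
it lies in `[-1, 0)`, so the floor drops by one.
-/

open Real goldenRatio

section FloorNatCast

variable {K : Type*} [Field K] [LinearOrder K] [IsStrictOrderedRing K] [FloorSemiring K]

theorem Nat.floor_natCast_add_of_nonneg_of_lt_one (m : ℕ) {δ : K} (h₀ : 0 ≤ δ) (h₁ : δ < 1) :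
    ⌊(m : K) + δ⌋₊ = m := by
  rw [add_comm, Nat.floor_add_natCast h₀, Nat.floor_eq_zero.mpr h₁, zero_add]

theorem Nat.floor_natCast_sub_of_pos_of_le_one (m : ℕ) {ε : K} (h₀ : 0 < ε) (h₁ : ε ≤ 1) :
    ⌊(m : K) - ε⌋₊ = m - 1 := by
  rcases Nat.eq_zero_or_pos m with rfl | hm
  · exact Nat.floor_of_nonpos (by simpa using h₀.le)
  · have hsplit : (m : K) - ε = ((m - 1 : ℕ) : K) + (1 - ε) := by
      rw [Nat.cast_sub hm, Nat.cast_one]; ring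
    rw [hsplit, Nat.floor_natCast_add_of_nonneg_of_lt_one _ (by linarith) (by linarith)]

end FloorNatCast

theorem goldenConj_pow_mem_Ioo_of_odd {n : ℕ} (hn : Odd n) : ψ ^ n ∈ Set.Ioo (-1) 0 := by
  have hlt : |ψ ^ n| < 1 := by
    rw [abs_pow]
    exact pow_lt_one₀ (abs_nonneg _)
      (abs_lt.mpr ⟨neg_one_lt_goldenConj, goldenConj_neg.trans one_pos⟩) hn.pos.ne'
  exact ⟨(abs_lt.mp hlt).1, hn.pow_neg goldenConj_neg⟩

theorem goldenConj_pow_mem_Ioc_of_even {n : ℕ} (hn : Even n) : ψ ^ n ∈ Set.Ioc 0 1 := by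
  refine ⟨hn.pow_pos goldenConj_ne_zero, ?_⟩
  rw [← hn.pow_abs]
  exact pow_le_one₀ (abs_nonneg _)
    (abs_le.mpr ⟨neg_one_lt_goldenConj.le, (goldenConj_neg.trans one_pos).le⟩)

theorem f_fib_eq_floor (n : ℕ) : f (Nat.fib n) = ⌊(Nat.fib (n + 1) : ℝ) - ψ ^ n⌋₊ := by
  rw [f, ← fib_succ_sub_goldenRatio_mul_fib, sub_sub_cancel]
  rfl

theorem f_fib (n : ℕ) :
    (Odd n → f (Nat.fib n) = Nat.fib (n + 1)) ∧
    (Even n → f (Nat.fib n) = Nat.fib (n + 1) - 1) := by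
  refine ⟨fun hodd => ?_, fun heven => ?_⟩
  · obtain ⟨hlower, hneg⟩ := goldenConj_pow_mem_Ioo_of_odd hodd
    rw [f_fib_eq_floor, sub_eq_add_neg]
    exact Nat.floor_natCast_add_of_nonneg_of_lt_one _ (by linarith) (by linarith)
  · obtain ⟨hpos, hle⟩ := goldenConj_pow_mem_Ioc_of_even heven
    rw [f_fib_eq_floor]
    exact Nat.floor_natCast_sub_of_pos_of_le_one _ hpos hle
end

section
/- Let S be a nonempty finite set of natural numbers, each of whose elements is ≥ 2, containing no two consecutive integers (i.e. if i ∈ S then i+1 ∉ S), and let n = ∑_{i∈S} fib(i). Then f(n) = ∑_{i∈S} fib(i+1) if the minimum element of S is odd, and f(n) = (∑_{i∈S} fib(i+1)) − 1 if the minimum element of S is even. -/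
noncomputable def psi : ℝ := (1 - Real.sqrt 5) / 2

lemma s5_sq : Real.sqrt 5 ^ 2 = 5 := Real.sq_sqrt (by norm_num)

lemma s5_gt : (2:ℝ) < Real.sqrt 5 := by
  nlinarith [s5_sq, Real.sqrt_nonneg 5]

lemma s5_lt : Real.sqrt 5 < 3 := by
  nlinarith [s5_sq, Real.sqrt_nonneg 5]

lemma phi_fib (i : ℕ) : phi * Nat.fib i = Nat.fib (i+1) - psi ^ i := by
  induction i using Nat.twoStepInduction with
  | zero => simp [phi, psi]
  | one => simp [phi, psi]; ring
  | more i ih1 ih2 =>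
    have hps : psi ^ 2 = psi + 1 := by
      have := s5_sq
      simp only [psi]; nlinarith
    have h1 : (Nat.fib (i+2) : ℝ) = Nat.fib (i+1) + Nat.fib i := by
      rw [Nat.fib_add_two]; push_cast; ring
    have h2 : (Nat.fib (i+3) : ℝ) = Nat.fib (i+2) + Nat.fib (i+1) := by
      rw [show i+3 = (i+1)+2 from rfl, Nat.fib_add_two]; push_cast; ring
    have h3 : psi ^ (i+2) = psi ^ (i+1) + psi ^ i := by
      have : psi ^ (i+2) = psi ^ i * psi ^ 2 := by ring
      rw [this, hps]; ring
    rw [h1, h2, h3]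
    linarith [ih1, ih2, mul_add phi (Nat.fib (i+1) : ℝ) (Nat.fib i : ℝ)]

theorem f_zeckendorf (S : Finset ℕ) (hS : S.Nonempty)
    (h2 : ∀ i ∈ S, 2 ≤ i) (hcons : ∀ i ∈ S, i + 1 ∉ S)
    (n : ℕ) (hn : n = ∑ i ∈ S, Nat.fib i) :
    (Odd (S.min' hS) → f n = ∑ i ∈ S, Nat.fib (i + 1)) ∧
    (Even (S.min' hS) → f n = (∑ i ∈ S, Nat.fib (i + 1)) - 1) := by
  set m := S.min' hS with hm
  have hmS : m ∈ S := S.min'_mem hS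
  have hm2 : 2 ≤ m := h2 m hmS
  set q : ℝ := (Real.sqrt 5 - 1) / 2 with hq
  have hq0 : 0 < q := by rw [hq]; linarith [s5_gt]
  have hq1 : q < 1 := by rw [hq]; linarith [s5_lt]
  have hqsq : q ^ 2 = 1 - q := by rw [hq]; nlinarith [s5_sq]
  have hpsiq : psi = -q := by rw [hq]; simp [psi]; ring
  -- the main decomposition: phi * n = T - eps
  set T : ℕ := ∑ i ∈ S, Nat.fib (i + 1) with hT
  set eps : ℝ := ∑ i ∈ S, psi ^ i with heps
  have hdecomp : phi * n = (T : ℝ) - eps := by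
    rw [hn, hT, heps]; push_cast
    rw [Finset.mul_sum, ← Finset.sum_sub_distrib]
    exact Finset.sum_congr rfl fun i _ => phi_fib i
  -- bound on rest
  set B : ℕ := max (S.max' hS) (m + 2) with hB
  set R : ℝ := ∑ i ∈ S.erase m, psi ^ i with hR
  have hepsR : eps = psi ^ m + R := by
    rw [heps, hR, ← Finset.add_sum_erase _ _ hmS]
  have hRbound : |R| < q ^ m := by
    have h1 : |R| ≤ ∑ i ∈ S.erase m, q ^ i := by
      refine (Finset.abs_sum_le_sum_abs _ _).trans (le_of_eq ?_)
      refine Finset.sum_congr rfl fun i _ => ?_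
      rw [hpsiq, abs_pow, abs_neg, abs_of_pos hq0]
    have h2 : ∑ i ∈ S.erase m, q ^ i ≤ ∑ i ∈ Finset.Ico (m+2) (B+1), q ^ i := by
      apply Finset.sum_le_sum_of_subset_of_nonneg
      · intro i hi
        have hiS := Finset.mem_of_mem_erase hi
        have hine := Finset.ne_of_mem_erase hi
        have hige : m ≤ i := S.min'_le i hiS
        have hile : i ≤ S.max' hS := S.le_max' i hiS
        have : i ≠ m + 1 := by
          intro h; exact hcons m hmS (h ▸ hiS)
        simp only [Finset.mem_Ico]
        constructor
        · omega
        · omega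
      · intro i _ _; positivity
    have h3 : ∑ i ∈ Finset.Ico (m+2) (B+1), q ^ i = (q ^ (B+1) - q ^ (m+2)) / (q - 1) := by
      apply geom_sum_Ico (ne_of_lt hq1)
      omega
    have h4 : (q ^ (B+1) - q ^ (m+2)) / (q - 1) < q ^ m := by
      rw [div_lt_iff_of_neg (by linarith)]
      have : q ^ m * (q - 1) = -(q ^ (m+2)) := by
        have : q ^ (m+2) = q ^ m * q ^ 2 := by ring
        rw [this, hqsq]; ring
      rw [this]
      have : 0 < q ^ (B+1) := by positivity
      linarith
    calc |R| ≤ _ := h1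
      _ ≤ _ := h2
      _ = _ := h3
      _ < _ := h4
  have hqm_small : q ^ m ≤ q ^ 2 := by
    exact pow_le_pow_of_le_one (le_of_lt hq0) (le_of_lt hq1) hm2
  have hq2 : 2 * q ^ 2 < 1 := by rw [hqsq]; rw [hq]; linarith [s5_gt]
  have habsR := abs_lt.mp hRbound
  -- T ≥ 1
  have hT1 : 1 ≤ T := by
    rw [hT]
    calc 1 ≤ Nat.fib (m + 1) := by
          have : 1 ≤ m + 1 := by omega
          have := Nat.fib_pos.mpr (by omega : 0 < m + 1)
          omega
      _ ≤ ∑ i ∈ S, Nat.fib (i + 1) :=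
          Finset.single_le_sum (f := fun i => Nat.fib (i+1)) (fun i _ => Nat.zero_le _) hmS
  constructor
  · intro hodd
    have hpm : psi ^ m = -(q ^ m) := by
      rw [hpsiq, Odd.neg_pow hodd]
    have he1 : eps < 0 := by rw [hepsR, hpm]; linarith [habsR.2]
    have he2 : -1 < eps := by
      rw [hepsR, hpm]
      have : -(q^m) - q^m ≥ -1 + (1 - 2*q^2) := by
        have : q ^ m ≤ q ^ 2 := hqm_small
        linarith
      linarith [habsR.1]
    show ⌊phi * n⌋₊ = T
    rw [Nat.floor_eq_iff (by rw [hdecomp]; linarith)]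
    rw [hdecomp]
    constructor
    · linarith
    · linarith
  · intro heven
    have hpm : psi ^ m = q ^ m := by
      rw [hpsiq, Even.neg_pow heven]
    have he1 : 0 < eps := by rw [hepsR, hpm]; linarith [habsR.1]
    have he2 : eps < 1 := by
      rw [hepsR, hpm]
      have : q ^ m ≤ q ^ 2 := hqm_small
      linarith [habsR.2]
    show ⌊phi * n⌋₊ = T - 1
    have hcast : ((T - 1 : ℕ) : ℝ) = (T : ℝ) - 1 := by
      push_cast [hT1]; ring
    rw [Nat.floor_eq_iff (by rw [hdecomp]; linarith)]
    rw [hdecomp, hcast]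
    constructor
    · linarith
    · have : ((T:ℝ) - 1) + 1 = T := by ring
      rw [this]; linarith
end

section
/- Let S be a nonempty finite set of natural numbers, each of whose elements is ≥ 2, containing no two consecutive integers (i.e. if i ∈ S then i+1 ∉ S), and let n = ∑_{i∈S} fib(i). Then n lies in the range of f on positive integers (i.e. ∃ x ≥ 1 with n = ⌊φ·x⌋) if and only if the minimum element of S is even; otherwise n is of the form ⌊φ·x⌋ + x for some x ≥ 1. -/
/-!
Write `ψ = -φ⁻¹` for the conjugate of `φ`. Binet's formula gives `φᵏ F_j = F_{j+k} - F_k ψʲ`, so if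
`n = ∑_{i ∈ S} F_i` and `x = ∑_{i ∈ S} F_{i-k}`, then `φᵏ x = n - F_k ∑_{i ∈ S} ψ^{i-k}`. For a set
without consecutive indices the sum of the `ψʲ` is dominated by its first term, so it lies in
`(-1, 0)` when the least exponent is odd. Taking `k = 1` when `min S` is even gives
`n = ⌊φ x⌋`; taking `k = 2` when `min S` is odd gives `n = ⌊φ² x⌋ = ⌊φ x⌋ + x`, and then `n` is not
of the form `⌊φ y⌋`, because the Beatty sequences of `φ` and `φ²` are disjoint.
-/

open Finset hiding Ioo
open Set (Ioo Ioo_subset_Ico_self)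
open Real
open scoped goldenRatio

lemma f_eq (n : ℕ) : f n = ⌊φ * n⌋₊ := rfl

lemma goldenRatio_pow_mul_fib (k j : ℕ) :
    φ ^ k * Nat.fib j = Nat.fib (j + k) - Nat.fib k * ψ ^ j := by
  rw [coe_fib_eq, coe_fib_eq, coe_fib_eq]
  ring

lemma sum_pow_lt_pow_of_forall_lt {r : ℝ} (hr₀ : 0 < r) (hr : r + r ^ 2 ≤ 1) (T : Finset ℕ)
    (hT : ∀ i ∈ T, i + 1 ∉ T) (m : ℕ) (hm : ∀ i ∈ T, m < i) : ∑ i ∈ T, r ^ i < r ^ m := by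
  induction T using Finset.induction_on_min generalizing m with
  | empty => simpa using pow_pos hr₀ m
  | insert a T ha ih =>
    have haT : a ∉ T := fun h => lt_irrefl a (ha a h)
    have hT' : ∀ i ∈ T, i + 1 ∉ T := fun i hi hi' =>
      hT i (mem_insert_of_mem hi) (mem_insert_of_mem hi')
    have haT' : ∀ i ∈ T, a + 1 < i := fun i hi =>
      Nat.lt_of_le_of_ne (ha i hi) fun h => hT a (mem_insert_self a T) (h ▸ mem_insert_of_mem hi)
    have hma : m + 1 ≤ a := hm a (mem_insert_self a T)
    have hr₁ : r ≤ 1 := by nlinarith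
    calc ∑ i ∈ insert a T, r ^ i = r ^ a + ∑ i ∈ T, r ^ i := sum_insert haT
      _ < r ^ a + r ^ (a + 1) := by gcongr; exact ih hT' (a + 1) haT'
      _ = r ^ a * (1 + r) := by ring
      _ ≤ r ^ (m + 1) * (1 + r) :=
        mul_le_mul_of_nonneg_right (pow_le_pow_of_le_one hr₀.le hr₁ hma) (by positivity)
      _ = r ^ m * (r + r ^ 2) := by ring
      _ ≤ r ^ m := mul_le_of_le_one_right (by positivity) hr

lemma sum_goldenConj_pow_mem_Ioo {T : Finset ℕ} (hT : ∀ i ∈ T, i + 1 ∉ T) {m : ℕ}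
    (hm : IsLeast (T : Set ℕ) m) (hodd : Odd m) : ∑ i ∈ T, ψ ^ i ∈ Ioo (-1) 0 := by
  set r := -ψ with hr_def
  have hr₀ : 0 < r := neg_pos.2 goldenConj_neg
  have hr : r + r ^ 2 = 1 := by rw [hr_def, neg_sq, goldenConj_sq]; ring
  have htail : |∑ i ∈ T.erase m, ψ ^ i| < r ^ (m + 1) := by
    refine (abs_sum_le_sum_abs _ _).trans_lt ?_
    simp only [abs_pow, abs_of_neg goldenConj_neg]
    refine sum_pow_lt_pow_of_forall_lt hr₀ hr.le _
      (fun i hi hi' => hT i (mem_of_mem_erase hi) (mem_of_mem_erase hi')) _ fun i hi => ?_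
    have hmi : m ≤ i := hm.2 (mem_of_mem_erase hi)
    have hi₁ : i ≠ m + 1 := by rintro rfl; exact hT m hm.1 (mem_of_mem_erase hi)
    have := ne_of_mem_erase hi
    omega
  have hψm : ψ ^ m = -r ^ m := by rw [hr_def, hodd.neg_pow, neg_neg]
  rw [← add_sum_erase T _ hm.1, hψm]
  obtain ⟨k, rfl⟩ := hodd
  have hr₁ : r ≤ 1 := by nlinarith
  have hhead : r ^ (2 * k + 1) + r ^ (2 * k + 1 + 1) = r ^ (2 * k) := by
    linear_combination r ^ (2 * k) * hr
  have hhead_le : r ^ (2 * k) ≤ 1 := pow_le_one₀ hr₀.le hr₁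
  have hdecr : r ^ (2 * k + 1 + 1) ≤ r ^ (2 * k + 1) :=
    pow_le_pow_of_le_one hr₀.le hr₁ (by omega)
  constructor <;> linarith [abs_lt.1 htail]

lemma exists_goldenRatio_pow_mul_mem_Ioo {S : Finset ℕ} (hS : ∀ i ∈ S, i + 1 ∉ S) {m k : ℕ}
    (hm : IsLeast (S : Set ℕ) m) (hk₀ : 0 < k) (hk : k ≤ m) (hodd : Odd (m - k)) :
    ∃ x : ℕ, 1 ≤ x ∧
      φ ^ k * x ∈ Ioo ((∑ i ∈ S, Nat.fib i : ℕ) : ℝ) ((∑ i ∈ S, Nat.fib i : ℕ) + Nat.fib k) := by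
  have hkS : ∀ i ∈ S, k ≤ i := fun i hi => hk.trans (hm.2 hi)
  set T := S.image (· - k)
  have hsum : ∑ j ∈ T, (Nat.fib (j + k) : ℝ) = ∑ i ∈ S, (Nat.fib i : ℝ) := by
    rw [sum_image fun i hi i' hi' h => by have := hkS i hi; have := hkS i' hi'; omega]
    exact sum_congr rfl fun i hi => by rw [Nat.sub_add_cancel (hkS i hi)]
  have hT : ∀ j ∈ T, j + 1 ∉ T := by
    simp only [T, mem_image, forall_exists_index, and_imp]
    rintro _ i hi rfl ⟨i', hi', h⟩
    have := hkS i hi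
    have := hkS i' hi'
    exact hS i hi (by rwa [show i' = i + 1 by omega] at hi')
  have hTm : IsLeast (T : Set ℕ) (m - k) := by
    rw [coe_image]
    exact (show Monotone (· - k) from fun _ _ h => Nat.sub_le_sub_right h k).map_isLeast hm
  have hx : φ ^ k * (∑ j ∈ T, Nat.fib j : ℕ)
      = ∑ i ∈ S, (Nat.fib i : ℝ) - Nat.fib k * ∑ j ∈ T, ψ ^ j := by
    rw [← hsum, Nat.cast_sum, mul_sum, mul_sum, ← sum_sub_distrib]
    exact sum_congr rfl fun j _ => goldenRatio_pow_mul_fib k j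
  have hψ := sum_goldenConj_pow_mem_Ioo hT hTm hodd
  have hfib : (0 : ℝ) < Nat.fib k := Nat.cast_pos.2 (Nat.fib_pos.2 hk₀)
  have hmem : φ ^ k * (∑ j ∈ T, Nat.fib j : ℕ)
      ∈ Ioo ((∑ i ∈ S, Nat.fib i : ℕ) : ℝ) ((∑ i ∈ S, Nat.fib i : ℕ) + Nat.fib k) := by
    rw [hx, Nat.cast_sum]
    constructor <;> nlinarith [hψ.1, hψ.2]
  refine ⟨_, Nat.one_le_iff_ne_zero.2 fun h0 => ?_, hmem⟩
  rw [h0, Nat.cast_zero, mul_zero] at hmem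
  exact hmem.1.not_ge (Nat.cast_nonneg _)

lemma goldenRatio_mul_mem_Ioo_f {y : ℕ} (hy : y ≠ 0) : φ * y ∈ Ioo (f y : ℝ) (f y + 1) :=
  ⟨(Nat.floor_le (mul_nonneg goldenRatio_pos.le y.cast_nonneg)).lt_of_ne
      ((goldenRatio_irrational.mul_natCast hy).ne_nat _).symm,
    Nat.lt_floor_add_one _⟩

lemma f_eq_of_mem_Ioo {x n : ℕ} (h : φ * x ∈ Ioo (n : ℝ) (n + 1)) : f x = n :=
  Nat.floor_eq_on_Ico n _ (Ioo_subset_Ico_self h)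

lemma f_add_self_eq_of_mem_Ioo {x n : ℕ} (h : φ ^ 2 * x ∈ Ioo (n : ℝ) (n + 1)) : f x + x = n := by
  rw [goldenRatio_sq, add_mul, one_mul] at h
  rw [f_eq, ← Nat.floor_add_natCast (mul_nonneg goldenRatio_pos.le x.cast_nonneg)]
  exact Nat.floor_eq_on_Ico n _ (Ioo_subset_Ico_self h)

/-- As `1/φ + 1/φ² = 1`, the two conditions would put `x + y` strictly between `n` and `n + 1`. -/
lemma goldenRatio_sq_mul_notMem_Ioo {x y n : ℕ} (hy : φ * y ∈ Ioo (n : ℝ) (n + 1)) :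
    φ ^ 2 * x ∉ Ioo (n : ℝ) (n + 1) := by
  rintro ⟨hx₁, hx₂⟩
  have hφ := goldenRatio_pos
  have hsq := goldenRatio_sq
  have h₁ : (n : ℝ) < x + y := by nlinarith [hy.1]
  have h₂ : (x + y : ℝ) < n + 1 := by nlinarith [hy.2]
  norm_cast at h₁ h₂
  omega

theorem zeckendorf_range_f (S : Finset ℕ) (hS : S.Nonempty)
    (h2 : ∀ i ∈ S, 2 ≤ i) (hcons : ∀ i ∈ S, i + 1 ∉ S)
    (n : ℕ) (hn : n = ∑ i ∈ S, Nat.fib i) :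
    ((∃ x : ℕ, 1 ≤ x ∧ n = f x) ↔ Even (S.min' hS)) ∧
    (Odd (S.min' hS) → ∃ x : ℕ, 1 ≤ x ∧ n = f x + x) := by
  have hm := S.isLeast_min' hS
  have hm₂ : 2 ≤ S.min' hS := h2 _ (S.min'_mem hS)
  have exists_of_odd (hodd : Odd (S.min' hS)) :
      ∃ x : ℕ, 1 ≤ x ∧ φ ^ 2 * x ∈ Ioo (n : ℝ) (n + 1) := by
    simpa [hn, Nat.fib_two] using
      exists_goldenRatio_pow_mul_mem_Ioo hcons hm two_pos hm₂ (Nat.Odd.sub_even hm₂ hodd even_two)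
  refine ⟨⟨?_, fun heven => ?_⟩, fun hodd => ?_⟩
  · rintro ⟨y, hy, rfl⟩
    by_contra heven
    obtain ⟨x, -, hx⟩ := exists_of_odd (Nat.not_even_iff_odd.1 heven)
    exact goldenRatio_sq_mul_notMem_Ioo (goldenRatio_mul_mem_Ioo_f (by omega)) hx
  · obtain ⟨x, hx, hφx⟩ := exists_goldenRatio_pow_mul_mem_Ioo hcons hm one_pos (by omega)
      (Nat.Even.sub_odd (by omega) heven odd_one)
    simp only [pow_one, Nat.fib_one, Nat.cast_one, ← hn] at hφx
    exact ⟨x, hx, (f_eq_of_mem_Ioo hφx).symm⟩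
  · obtain ⟨x, hx, hφx⟩ := exists_of_odd hodd
    exact ⟨x, hx, (f_add_self_eq_of_mem_Ioo hφx).symm⟩
end

section
/- For all natural numbers n ≥ 1, n' ≥ 1, m, and m', the system of congruences x ≡ m (mod n) and f(x) ≡ m' (mod n') has a solution x in the natural numbers. -/
theorem exists_nat_int_mul_add_mem_of_irrational {a p : ℝ} (hp : 0 < p)
    (ha : Irrational (a / p)) (b : ℝ) {U : Set ℝ} (hU : IsOpen U) (hne : U.Nonempty) :
    ∃ t : ℕ, ∃ k : ℤ, t * a + k * p + b ∈ U := by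
  have := Fact.mk hp
  have hdense : DenseRange (fun t : ℕ ↦ t • (a : AddCircle p)) :=
    denseRange_zsmul_iff_nsmul.1 (AddCircle.denseRange_zsmul_coe_iff.2 ha)
  have hV : IsOpen ((· + (b : AddCircle p)) ⁻¹' ((↑) '' U)) :=
    (QuotientAddGroup.isOpenMap_coe U hU).preimage (continuous_add_const _)
  obtain ⟨u, hu⟩ := hne
  obtain ⟨t, v, hv, hvt⟩ :=
    hdense.exists_mem_open hV ⟨((u - b : ℝ) : AddCircle p), u, hu, by simp⟩
  obtain ⟨k, hk⟩ := QuotientAddGroup.eq.1 hvt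
  refine ⟨t, -k, ?_⟩
  convert hv using 1
  simp only [zsmul_eq_mul, nsmul_eq_mul] at hk
  push_cast
  linarith

theorem Nat.floor_modEq_of_floor_eq {r : ℝ} (hr : 0 ≤ r) {m n : ℕ} {k : ℤ}
    (h : ⌊r⌋ = m + k * n) : ⌊r⌋₊ ≡ m [MOD n] := by
  rw [← Int.natCast_modEq_iff, Int.natCast_floor_eq_floor hr, h]
  exact Int.modEq_iff_dvd.2 ⟨-k, by ring⟩

theorem congruence_system_solvable (n : ℕ) (hn : 1 ≤ n) (n' : ℕ) (hn' : 1 ≤ n')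
    (m m' : ℕ) :
    ∃ x : ℕ, x ≡ m [MOD n] ∧ f x ≡ m' [MOD n'] := by
  have hirr : Irrational (phi * n / n') :=
    (Real.goldenRatio_irrational.mul_natCast (by omega)).div_natCast (by omega)
  obtain ⟨t, k, ht⟩ := exists_nat_int_mul_add_mem_of_irrational (by positivity) hirr
    (phi * m - m') isOpen_Ioo (Set.nonempty_Ioo.2 one_pos)
  refine ⟨m + n * t, Nat.add_mul_mod_self_left m n t, ?_⟩
  unfold f
  refine Nat.floor_modEq_of_floor_eq (by unfold phi; positivity) (k := -k) ?_
  rw [Int.floor_eq_iff]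
  push_cast
  constructor <;> linarith [ht.1, ht.2]
end
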